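/- arXiv:math/0404552 — 2 statements merged into one kernel-verified Lean document; each statement's English description precedes it below -/
import Mathlib

section
/- Let 0 < δ < ε < 1 be N-adic rationals with ε − δ an integer power of N. Then there exists f ∈ F(N) with f(x) = x for x ∈ [0, δ] ∪ [ε, 1] and f(x) ≠ x for all x ∈ (δ, ε). -/
open Set

noncomputable section

/-- `d` is an `N`-adic rational: of the form `a / N ^ k`. -/
def NAdic (N : ℕ) (d : ℝ) : Prop := ∃ a k : ℕ, d = (a : ℝ) / (N : ℝ) ^ k

/-- Membership in the generalized Thompson group `F(N)`, modeled as permutations of `ℝ`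
that are the identity outside `[0,1]`: continuous, strictly increasing, fixing `0` and `1`,
differentiable except at finitely many `N`-adic points of `[0,1]`, with derivatives
integer powers of `N`. -/
def InFN (N : ℕ) (f : Equiv.Perm ℝ) : Prop :=
  Continuous f ∧ StrictMono f ∧
  (∀ x : ℝ, x ∉ Icc (0:ℝ) 1 → f x = x) ∧
  f 0 = 0 ∧ f 1 = 1 ∧
  ∃ s : Finset ℝ, (∀ x ∈ s, x ∈ Icc (0:ℝ) 1 ∧ NAdic N x) ∧
    ∀ x ∈ Icc (0:ℝ) 1, x ∉ s → ∃ m : ℤ, HasDerivAt (⇑f) ((N : ℝ) ^ m) x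

/-- Membership in `F' ⊆ F(N)`: elements that are the identity near both `0` and `1`. -/
def InF' (N : ℕ) (f : Equiv.Perm ℝ) : Prop :=
  InFN N f ∧ ∃ ε δ : ℝ, 0 < ε ∧ ε < 1 ∧ 0 < δ ∧ δ < 1 ∧
    (∀ x ∈ Icc (0:ℝ) ε, f x = x) ∧ (∀ x ∈ Icc δ (1:ℝ), f x = x)

/-- Membership in `D ⊆ F(N)`: elements that are the identity near `1`. -/
def InD (N : ℕ) (f : Equiv.Perm ℝ) : Prop :=
  InFN N f ∧ ∃ δ : ℝ, 0 < δ ∧ δ < 1 ∧ ∀ x ∈ Icc δ (1:ℝ), f x = x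

/-- The piecewise linear map `A_{d,p}`. -/
def A (N : ℕ) (d : ℝ) (p : ℤ) (x : ℝ) : ℝ :=
  if x ≤ d then x / (N : ℝ) ^ p
  else if x ≤ 1 - d / (N : ℝ) ^ p then x - d + d / (N : ℝ) ^ p
  else (N : ℝ) ^ p * x + 1 - (N : ℝ) ^ p

lemma NAdic.add' {N : ℕ} (hN : 0 < N) {x y : ℝ} (hx : NAdic N x) (hy : NAdic N y) :
    NAdic N (x + y) := by
  obtain ⟨a, k, rfl⟩ := hx
  obtain ⟨b, j, rfl⟩ := hy
  have hN0 : (N : ℝ) ≠ 0 := Nat.cast_ne_zero.mpr hN.ne'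
  refine ⟨a * N ^ j + b * N ^ k, k + j, ?_⟩
  rw [div_add_div _ _ (pow_ne_zero k hN0) (pow_ne_zero j hN0), pow_add]
  push_cast
  ring

lemma NAdic.zpow' {N : ℕ} (hN : 0 < N) (m : ℤ) : NAdic N ((N : ℝ) ^ m) := by
  have hN0 : (N : ℝ) ≠ 0 := Nat.cast_ne_zero.mpr hN.ne'
  rcases m with k | k
  · exact ⟨N ^ k, 0, by push_cast; simp⟩
  · refine ⟨1, k + 1, ?_⟩
    rw [zpow_negSucc]
    push_cast
    rw [one_div]

lemma NAdic.natmul {N a : ℕ} {x : ℝ} (hx : NAdic N x) : NAdic N ((a : ℝ) * x) := by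
  obtain ⟨b, k, rfl⟩ := hx
  exact ⟨a * b, k, by push_cast; ring⟩

set_option maxHeartbeats 1000000 in
/-- scaling-down lemma: given `N`-adic `0 < δ < ε < 1` with `ε - δ` a power of
`N`, there is `f ∈ F(N)` which is the identity on `[0,δ] ∪ [ε,1]` and fixes no point of
`(δ, ε)`. -/
theorem stmt9 (N : ℕ) (hN : 2 ≤ N) (δ ε : ℝ) (hδ : NAdic N δ) (hε : NAdic N ε)
    (h0 : 0 < δ) (hδε : δ < ε) (h1 : ε < 1) (hpow : ∃ m : ℤ, ε - δ = (N : ℝ) ^ m) :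
    ∃ f : Equiv.Perm ℝ, InFN N f ∧
      (∀ x ∈ Icc (0:ℝ) δ ∪ Icc ε (1:ℝ), f x = x) ∧
      (∀ x ∈ Ioo δ ε, f x ≠ x) := by
  obtain ⟨m, hm⟩ := hpow
  have hn2 : (2:ℝ) ≤ (N:ℝ) := by exact_mod_cast hN
  have hn1 : (1:ℝ) < (N:ℝ) := by linarith
  have hn0 : (0:ℝ) < (N:ℝ) := by linarith
  have hne : (N:ℝ) ≠ 0 := ne_of_gt hn0
  set n : ℝ := (N : ℝ) with hndef
  set u : ℝ := n ^ (m - 2 : ℤ) with hudef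
  set v : ℝ := n ^ (m - 1 : ℤ) with hvdef
  have hu0 : 0 < u := zpow_pos hn0 _
  have hv0 : 0 < v := zpow_pos hn0 _
  have hnu : n * u = v := by
    rw [hudef, hvdef, show m - 1 = (m - 2) + 1 by ring, zpow_add₀ hne, zpow_one]
    ring_nf
  have hnv : n * v = ε - δ := by
    rw [hvdef, hm, show m = (m - 1) + 1 by ring, zpow_add₀ hne, zpow_one]
    ring_nf
  clear_value n u v
  have hinv : n * n⁻¹ = 1 := mul_inv_cancel₀ hne
  have hinv0 : 0 < n⁻¹ := inv_pos.mpr hn0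
  have hinv1 : n⁻¹ < 1 := by
    rw [inv_lt_one_iff₀]; right; exact hn1
  -- b₁ = δ + u ≤ b₂ = ε - v
  have hb12 : δ + u ≤ ε - v := by nlinarith [mul_nonneg (by nlinarith : (0:ℝ) ≤ n^2 - n - 1) hu0.le]
  have hbv : ε - v < ε := by linarith
  have hbu : δ < δ + u := by linarith
  -- the map
  set G : ℝ → ℝ := fun x =>
    max x (min (δ + n * (x - δ)) (min (x + (n - 1) * u) (ε + n⁻¹ * (x - ε)))) with hG
  clear_value G
  -- basic comparisons between pieces
  have h12 : ∀ x : ℝ, x ≤ δ + u → δ + n * (x - δ) ≤ x + (n - 1) * u := by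
    intro x hx
    nlinarith [mul_nonneg (by linarith : (0:ℝ) ≤ n - 1) (by linarith : (0:ℝ) ≤ δ + u - x)]
  have h21 : ∀ x : ℝ, δ + u ≤ x → x + (n - 1) * u ≤ δ + n * (x - δ) := by
    intro x hx
    nlinarith [mul_nonneg (by linarith : (0:ℝ) ≤ n - 1) (by linarith : (0:ℝ) ≤ x - δ - u)]
  have h23 : ∀ x : ℝ, x ≤ ε - v → x + (n - 1) * u ≤ ε + n⁻¹ * (x - ε) := by
    intro x hx
    have hA : n * (n⁻¹ * (x - ε)) = x - ε := by
      rw [← mul_assoc, hinv, one_mul]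
    have key : n * (x + (n - 1) * u) ≤ n * (ε + n⁻¹ * (x - ε)) := by
      nlinarith [mul_nonneg (by linarith : (0:ℝ) ≤ n - 1) (by linarith : (0:ℝ) ≤ ε - v - x)]
    exact le_of_mul_le_mul_left key hn0
  have h32 : ∀ x : ℝ, ε - v ≤ x → ε + n⁻¹ * (x - ε) ≤ x + (n - 1) * u := by
    intro x hx
    have hA : n * (n⁻¹ * (x - ε)) = x - ε := by
      rw [← mul_assoc, hinv, one_mul]
    have key : n * (ε + n⁻¹ * (x - ε)) ≤ n * (x + (n - 1) * u) := by
      nlinarith [mul_nonneg (by linarith : (0:ℝ) ≤ n - 1) (by linarith : (0:ℝ) ≤ x - (ε - v))]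
    exact le_of_mul_le_mul_left key hn0
  have xp1 : ∀ x : ℝ, δ ≤ x → x ≤ δ + n * (x - δ) := by
    intro x hx
    nlinarith [mul_nonneg (by linarith : (0:ℝ) ≤ n - 1) (by linarith : (0:ℝ) ≤ x - δ)]
  have p1x : ∀ x : ℝ, x ≤ δ → δ + n * (x - δ) ≤ x := by
    intro x hx
    nlinarith [mul_nonneg (by linarith : (0:ℝ) ≤ n - 1) (by linarith : (0:ℝ) ≤ δ - x)]
  have xp1' : ∀ x : ℝ, δ < x → x < δ + n * (x - δ) := by
    intro x hx
    nlinarith [mul_pos (by linarith : (0:ℝ) < n - 1) (by linarith : (0:ℝ) < x - δ)]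
  have xp2 : ∀ x : ℝ, x ≤ x + (n - 1) * u := by
    intro x
    nlinarith [mul_nonneg (by linarith : (0:ℝ) ≤ n - 1) hu0.le]
  have xp2' : ∀ x : ℝ, x < x + (n - 1) * u := by
    intro x
    nlinarith [mul_pos (by linarith : (0:ℝ) < n - 1) hu0]
  have xp3 : ∀ x : ℝ, x ≤ ε → x ≤ ε + n⁻¹ * (x - ε) := by
    intro x hx
    nlinarith [mul_nonneg (by linarith : (0:ℝ) ≤ 1 - n⁻¹) (by linarith : (0:ℝ) ≤ ε - x)]
  have xp3' : ∀ x : ℝ, x < ε → x < ε + n⁻¹ * (x - ε) := by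
    intro x hx
    nlinarith [mul_pos (by linarith : (0:ℝ) < 1 - n⁻¹) (by linarith : (0:ℝ) < ε - x)]
  have p3x : ∀ x : ℝ, ε ≤ x → ε + n⁻¹ * (x - ε) ≤ x := by
    intro x hx
    nlinarith [mul_nonneg (by linarith : (0:ℝ) ≤ 1 - n⁻¹) (by linarith : (0:ℝ) ≤ x - ε)]
  -- piecewise descriptions of G
  have e0 : ∀ x : ℝ, x ≤ δ → G x = x := by
    intro x hx
    simp only [hG]
    exact max_eq_left (le_trans (min_le_left _ _) (p1x x hx))
  have e4 : ∀ x : ℝ, ε ≤ x → G x = x := by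
    intro x hx
    simp only [hG]
    exact max_eq_left (le_trans (min_le_right _ _) (le_trans (min_le_right _ _) (p3x x hx)))
  have e1 : ∀ x : ℝ, δ ≤ x → x ≤ δ + u → G x = δ + n * (x - δ) := by
    intro x hx1 hx2
    simp only [hG]
    rw [min_eq_left (h23 x (le_trans hx2 hb12)), min_eq_left (h12 x hx2)]
    exact max_eq_right (xp1 x hx1)
  have e2 : ∀ x : ℝ, δ + u ≤ x → x ≤ ε - v → G x = x + (n - 1) * u := by
    intro x hx1 hx2
    simp only [hG]
    rw [min_eq_left (h23 x hx2), min_eq_right (h21 x hx1)]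
    exact max_eq_right (xp2 x)
  have e3 : ∀ x : ℝ, ε - v ≤ x → x ≤ ε → G x = ε + n⁻¹ * (x - ε) := by
    intro x hx1 hx2
    simp only [hG]
    rw [min_eq_right (h32 x hx1),
      min_eq_right (le_trans (h32 x hx1) (h21 x (le_trans hb12 hx1)))]
    exact max_eq_right (xp3 x hx2)
  -- strict monotonicity
  have hmono : StrictMono G := by
    intro a b hab
    simp only [hG]
    have m1 : δ + n * (a - δ) < δ + n * (b - δ) := by
      nlinarith [mul_pos hn0 (by linarith : (0:ℝ) < b - a)]
    have m2 : a + (n - 1) * u < b + (n - 1) * u := by linarith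
    have m3 : ε + n⁻¹ * (a - ε) < ε + n⁻¹ * (b - ε) := by
      nlinarith [mul_pos hinv0 (by linarith : (0:ℝ) < b - a)]
    exact max_lt_max hab (min_lt_min m1 (min_lt_min m2 m3))
  -- continuity
  have hcont : Continuous G := by
    rw [hG]; fun_prop
  -- surjectivity
  have hsurj : Function.Surjective G := by
    apply hcont.surjective
    · refine Filter.Tendsto.congr' ?_ Filter.tendsto_id
      filter_upwards [Filter.eventually_ge_atTop ε] with x hx
      exact (e4 x hx).symm
    · refine Filter.Tendsto.congr' ?_ Filter.tendsto_id
      filter_upwards [Filter.eventually_le_atBot δ] with x hx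
      exact (e0 x hx).symm
  refine ⟨Equiv.ofBijective G ⟨hmono.injective, hsurj⟩, ?_, ?_, ?_⟩
  · refine ⟨hcont, hmono, ?_, e0 0 h0.le, e4 1 h1.le, ?_⟩
    · intro x hx
      rw [mem_Icc, not_and_or, not_le, not_le] at hx
      rcases hx with hx | hx
      · exact e0 x (by linarith)
      · exact e4 x (by linarith)
    · refine ⟨{δ, δ + u, ε - v, ε}, ?_, ?_⟩
      · intro x hx
        have hNpos : 0 < N := by omega
        have hUadic : NAdic N u := by
          rw [hudef, hndef]; exact NAdic.zpow' hNpos _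
        have hb2 : NAdic N (ε - v) := by
          have hcast : ((N - 1 : ℕ) : ℝ) = n - 1 := by
            rw [Nat.cast_sub (by omega : 1 ≤ N)]; simp [hndef]
          have : ε - v = δ + ((N - 1 : ℕ) : ℝ) * v := by
            rw [hcast]; nlinarith [hnv]
          rw [this, hvdef, hndef]
          exact NAdic.add' hNpos hδ (NAdic.natmul (NAdic.zpow' hNpos _))
        simp only [Finset.mem_insert, Finset.mem_singleton] at hx
        rcases hx with rfl | rfl | rfl | rfl
        · exact ⟨⟨h0.le, by linarith⟩, hδ⟩
        · exact ⟨⟨by linarith, by linarith⟩, NAdic.add' hNpos hδ hUadic⟩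
        · exact ⟨⟨by linarith, by linarith⟩, hb2⟩
        · exact ⟨⟨by linarith, h1.le⟩, hε⟩
      · intro x hx hxs
        obtain ⟨hx0, hx1⟩ := hx
        simp only [Finset.mem_insert, Finset.mem_singleton, not_or] at hxs
        obtain ⟨ne1, ne2, ne3, ne4⟩ := hxs
        have hd1 : HasDerivAt (fun z : ℝ => δ + n * (z - δ)) n x := by
          simpa using (((hasDerivAt_id x).sub_const δ).const_mul n).const_add δ
        have hd2 : HasDerivAt (fun z : ℝ => z + (n - 1) * u) 1 x :=
          (hasDerivAt_id x).add_const _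
        have hd3 : HasDerivAt (fun z : ℝ => ε + n⁻¹ * (z - ε)) n⁻¹ x := by
          simpa using (((hasDerivAt_id x).sub_const ε).const_mul n⁻¹).const_add ε
        rcases lt_trichotomy x δ with hc | hc | hc
        · refine ⟨0, ?_⟩
          rw [zpow_zero]
          exact (hasDerivAt_id x).congr_of_eventuallyEq
            (Filter.eventuallyEq_of_mem (Iio_mem_nhds hc) (fun y hy => e0 y (le_of_lt hy)))
        · exact absurd hc ne1
        rcases lt_trichotomy x (δ + u) with hc' | hc' | hc'
        · refine ⟨1, ?_⟩
          rw [zpow_one, ← hndef]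
          exact hd1.congr_of_eventuallyEq
            (Filter.eventuallyEq_of_mem (Ioo_mem_nhds hc hc')
              (fun y hy => e1 y hy.1.le hy.2.le))
        · exact absurd hc' ne2
        rcases lt_trichotomy x (ε - v) with hc'' | hc'' | hc''
        · refine ⟨0, ?_⟩
          rw [zpow_zero]
          exact hd2.congr_of_eventuallyEq
            (Filter.eventuallyEq_of_mem (Ioo_mem_nhds hc' hc'')
              (fun y hy => e2 y hy.1.le hy.2.le))
        · exact absurd hc'' ne3
        rcases lt_trichotomy x ε with hc''' | hc''' | hc'''
        · refine ⟨-1, ?_⟩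
          rw [zpow_neg_one, ← hndef]
          exact hd3.congr_of_eventuallyEq
            (Filter.eventuallyEq_of_mem (Ioo_mem_nhds hc'' hc''')
              (fun y hy => e3 y hy.1.le hy.2.le))
        · exact absurd hc''' ne4
        · refine ⟨0, ?_⟩
          rw [zpow_zero]
          exact (hasDerivAt_id x).congr_of_eventuallyEq
            (Filter.eventuallyEq_of_mem (Ioi_mem_nhds hc''') (fun y hy => e4 y (le_of_lt hy)))
  · intro x hx
    rcases hx with hx | hx
    · exact e0 x hx.2
    · exact e4 x hx.1
  · intro x hx
    obtain ⟨hx1, hx2⟩ := hx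
    have hlt : x < G x := by
      have : x < min (δ + n * (x - δ)) (min (x + (n - 1) * u) (ε + n⁻¹ * (x - ε))) :=
        lt_min (xp1' x hx1) (lt_min (xp2' x) (xp3' x hx2))
      simp only [hG]
      exact lt_of_lt_of_le this (le_max_right _ _)
    exact ne_of_gt hlt
end
end

section
/- For every finite subset {g_1, …, g_n} of D there exist nontrivial g, h ∈ F' such that g commutes with every g_i, h commutes with every g_i, and g h ≠ h g. -/
open Set

noncomputable section

/-!
Every element of `D` fixes some `[δ, ∞)` with `δ < 1`, so finitely many of them fix a common
`[c, ∞)`, with `c = 1 - N⁻ᵏ` chosen `N`-adic. Beyond `c` we place two piecewise linear bumps with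
slopes `N`, `1`, `N⁻¹` and `N`-adic breakpoints, so both lie in `F'`. An increasing map fixing
`[c, ∞)` preserves `(-∞, c)`, where the bumps are the identity, hence commutes with them. The
supports `[c, c + w]` and `[c + u, c + u + w]` overlap without being nested: the first bump moves
`c + u` into the interior of the second support, where the second one moves it further, while the
other order of composition moves `c + u` only by the first bump.
-/

open Filter Topology

namespace NAdic

variable {N : ℕ} {x y : ℝ}

lemma nonneg (hx : NAdic N x) : 0 ≤ x := by
  obtain ⟨a, k, rfl⟩ := hx
  positivity

lemma one : NAdic N 1 := ⟨1, 0, by simp⟩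

lemma inv_pow (k : ℕ) : NAdic N ((N : ℝ) ^ k)⁻¹ := ⟨1, k, by simp⟩

lemma div_natCast (hx : NAdic N x) : NAdic N (x / N) := by
  obtain ⟨a, k, rfl⟩ := hx
  exact ⟨a, k + 1, by rw [pow_succ, div_div]⟩

lemma add (hN : 0 < N) (hx : NAdic N x) (hy : NAdic N y) : NAdic N (x + y) := by
  obtain ⟨a, k, rfl⟩ := hx
  obtain ⟨b, j, rfl⟩ := hy
  refine ⟨a * N ^ j + b * N ^ k, k + j, ?_⟩
  have : (N : ℝ) ≠ 0 := by positivity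
  push_cast
  field_simp
  ring

lemma sub (hN : 0 < N) (hx : NAdic N x) (hy : NAdic N y) (hyx : y ≤ x) : NAdic N (x - y) := by
  obtain ⟨a, k, rfl⟩ := hx
  obtain ⟨b, j, rfl⟩ := hy
  have : (N : ℝ) ≠ 0 := by positivity
  have hle : b * N ^ k ≤ a * N ^ j := by
    rw [div_le_div_iff₀ (by positivity) (by positivity)] at hyx
    exact_mod_cast hyx
  refine ⟨a * N ^ j - b * N ^ k, k + j, ?_⟩
  rw [Nat.cast_sub hle]
  push_cast
  field_simp
  ring

end NAdic

/-- On `[α, α + w]` this is the piecewise linear map with slopes `r`, `1`, `r⁻¹` and breakpoints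
`α + w / r ^ 2`, `α + w - w / r`; elsewhere it is the identity. The middle piece only exists when
`r ^ 2 ≥ r + 1`, hence the hypothesis `2 ≤ r` in the explicit formulas below. -/
def bump (r α w x : ℝ) : ℝ :=
  max x (min (α + r * (x - α)) (min (x + (r - 1) * w / r ^ 2) (α + w + (x - (α + w)) / r)))

section Bump

variable {r α β w v x : ℝ}

lemma continuous_bump : Continuous (bump r α w) := by
  unfold bump
  fun_prop

lemma strictMono_bump (hr : 0 < r) : StrictMono (bump r α w) := by
  intro a b hab
  have : (a - (α + w)) / r < (b - (α + w)) / r := div_lt_div_of_pos_right (by linarith) hr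
  exact max_lt_max hab (min_lt_min (by nlinarith) (min_lt_min (by linarith) (by linarith)))

lemma bump_of_le (hr : 1 ≤ r) (hx : x ≤ α) : bump r α w x = x :=
  max_eq_left <| (min_le_left _ _).trans <| by nlinarith

lemma bump_of_ge (hr : 1 ≤ r) (hx : α + w ≤ x) : bump r α w x = x := by
  have : (x - (α + w)) / r ≤ x - (α + w) := div_le_self (by linarith) hr
  exact max_eq_left <| (min_le_right _ _).trans <| (min_le_right _ _).trans <| by linarith

lemma lt_bump (hr : 1 < r) (h₁ : α < x) (h₂ : x < α + w) : x < bump r α w x := by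
  have hw : 0 < (r - 1) * w / r ^ 2 := by
    have : 0 < w := by linarith
    positivity
  have : x - (α + w) < (x - (α + w)) / r := by
    rw [lt_div_iff₀ (by linarith)]
    nlinarith
  exact lt_max_of_lt_right (lt_min (by nlinarith) (lt_min (by linarith) (by linarith)))

lemma bump_eq_of_mem_Icc_left (hr : 2 ≤ r) (hx : x ∈ Icc α (α + w / r ^ 2)) :
    bump r α w x = α + r * (x - α) := by
  obtain ⟨h₁, h₂⟩ := hx
  have hxw : (x - α) * r ^ 2 ≤ w := by
    rw [← le_div_iff₀ (by positivity)]
    linarith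
  have l₁ : α + r * (x - α) ≤ x + (r - 1) * w / r ^ 2 := by
    rw [← sub_nonneg]
    field_simp
    nlinarith
  have l₂ : α + r * (x - α) ≤ α + w + (x - (α + w)) / r := by
    rw [← sub_nonneg]
    field_simp
    nlinarith [mul_le_mul_of_nonneg_left hxw (by linarith : (0 : ℝ) ≤ r - 1),
      mul_nonneg (mul_nonneg (by linarith : (0 : ℝ) ≤ r - 1) (by linarith : 0 ≤ x - α))
        (by nlinarith : (0 : ℝ) ≤ r ^ 2 - r - 1)]
  unfold bump
  rw [min_eq_left (le_min l₁ l₂), max_eq_right (by nlinarith)]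

lemma bump_eq_of_mem_Icc_middle (hr : 2 ≤ r) (hx : x ∈ Icc (α + w / r ^ 2) (α + w - w / r)) :
    bump r α w x = x + (r - 1) * w / r ^ 2 := by
  obtain ⟨h₁, h₂⟩ := hx
  have hxw : w ≤ (x - α) * r ^ 2 := by
    rw [← div_le_iff₀ (by positivity)]
    linarith
  have hxw' : (x - α) * r ≤ w * r - w := by
    have e : w * r - w = (w - w / r) * r := by field_simp
    rw [e]
    exact mul_le_mul_of_nonneg_right (by linarith) (by linarith)
  have l₁ : x + (r - 1) * w / r ^ 2 ≤ α + r * (x - α) := by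
    rw [← sub_nonneg]
    field_simp
    nlinarith
  have l₂ : x + (r - 1) * w / r ^ 2 ≤ α + w + (x - (α + w)) / r := by
    rw [← sub_nonneg]
    field_simp
    nlinarith [mul_le_mul_of_nonneg_right hxw' (by nlinarith : (0 : ℝ) ≤ r * (r - 1))]
  have hw : 0 ≤ (r - 1) * w / r ^ 2 := by
    have h := mul_le_mul_of_nonneg_right hxw' (by linarith : (0 : ℝ) ≤ r)
    have : 0 ≤ w := by nlinarith [(by nlinarith : (1 : ℝ) ≤ r ^ 2 - r - 1)]
    have : 0 ≤ r - 1 := by linarith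
    positivity
  unfold bump
  rw [min_eq_left l₂, min_eq_right l₁, max_eq_right (by linarith)]

lemma bump_eq_of_mem_Icc_right (hr : 2 ≤ r) (hx : x ∈ Icc (α + w - w / r) (α + w)) :
    bump r α w x = α + w + (x - (α + w)) / r := by
  obtain ⟨h₁, h₂⟩ := hx
  have hxw : w * r - w ≤ (x - α) * r := by
    have e : w * r - w = (w - w / r) * r := by field_simp
    rw [e]
    exact mul_le_mul_of_nonneg_right (by linarith) (by linarith)
  have l₁ : α + w + (x - (α + w)) / r ≤ x + (r - 1) * w / r ^ 2 := by
    rw [← sub_nonneg]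
    field_simp
    nlinarith [mul_le_mul_of_nonneg_right hxw (by nlinarith : (0 : ℝ) ≤ r * (r - 1))]
  have l₂ : α + w + (x - (α + w)) / r ≤ α + r * (x - α) := by
    rw [← sub_nonneg]
    field_simp
    nlinarith [mul_le_mul_of_nonneg_left hxw (by linarith : (0 : ℝ) ≤ r),
      mul_nonneg (mul_nonneg (by nlinarith : (0 : ℝ) ≤ w) (by linarith : (0 : ℝ) ≤ r))
        (by linarith : (0 : ℝ) ≤ r - 2)]
  have l₃ : x ≤ α + w + (x - (α + w)) / r := by
    rw [← sub_nonneg]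
    field_simp
    nlinarith
  unfold bump
  rw [min_eq_right l₁, min_eq_right l₂, max_eq_right l₃]

lemma exists_hasDerivAt_bump (hr : 2 ≤ r)
    (hx : x ∉ ({α, α + w / r ^ 2, α + w - w / r, α + w} : Finset ℝ)) :
    ∃ m : ℤ, HasDerivAt (bump r α w) (r ^ m) x := by
  simp only [Finset.mem_insert, Finset.mem_singleton, not_or] at hx
  obtain ⟨hx₁, hx₂, hx₃, hx₄⟩ := hx
  rcases lt_or_gt_of_ne hx₁ with h₁ | h₁
  · refine ⟨0, (hasDerivAt_id x).congr_of_eventuallyEq ?_⟩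
    filter_upwards [Iio_mem_nhds h₁] with y hy using bump_of_le (by linarith) (le_of_lt hy)
  rcases (lt_or_gt_of_ne hx₄).symm with h₄ | h₄
  · refine ⟨0, (hasDerivAt_id x).congr_of_eventuallyEq ?_⟩
    filter_upwards [Ioi_mem_nhds h₄] with y hy using bump_of_ge (by linarith) (le_of_lt hy)
  rcases lt_or_gt_of_ne hx₂ with h₂ | h₂
  · refine ⟨1, ?_⟩
    have := (((hasDerivAt_id x).sub_const α).const_mul r).const_add α
    refine (this.congr_deriv (by simp)).congr_of_eventuallyEq ?_
    filter_upwards [Ioo_mem_nhds h₁ h₂] with y hy using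
      bump_eq_of_mem_Icc_left hr (Ioo_subset_Icc_self hy)
  rcases lt_or_gt_of_ne hx₃ with h₃ | h₃
  · have := (hasDerivAt_id x).add_const ((r - 1) * w / r ^ 2)
    refine ⟨0, (this.congr_deriv (by simp)).congr_of_eventuallyEq ?_⟩
    filter_upwards [Ioo_mem_nhds h₂ h₃] with y hy using
      bump_eq_of_mem_Icc_middle hr (Ioo_subset_Icc_self hy)
  · refine ⟨-1, ?_⟩
    have := (((hasDerivAt_id x).sub_const (α + w)).div_const r).const_add (α + w)
    refine (this.congr_deriv (by simp)).congr_of_eventuallyEq ?_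
    filter_upwards [Ioo_mem_nhds h₃ h₄] with y hy using
      bump_eq_of_mem_Icc_right hr (Ioo_subset_Icc_self hy)

lemma surjective_bump (hr : 1 ≤ r) : Function.Surjective (bump r α w) := by
  refine continuous_bump.surjective ?_ ?_
  · refine tendsto_id.congr' ?_
    filter_upwards [eventually_ge_atTop (α + w)] with y hy using (bump_of_ge hr hy).symm
  · refine tendsto_id.congr' ?_
    filter_upwards [eventually_le_atBot α] with y hy using (bump_of_le hr hy).symm

def bumpPerm (r α w : ℝ) (hr : 1 ≤ r) : Equiv.Perm ℝ :=
  Equiv.ofBijective (bump r α w)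
    ⟨(strictMono_bump (by linarith)).injective, surjective_bump hr⟩

@[simp]
lemma bumpPerm_apply (hr : 1 ≤ r) (x : ℝ) : bumpPerm r α w hr x = bump r α w x := rfl

lemma bumpPerm_ne_one (hr : 1 < r) (hw : 0 < w) : bumpPerm r α w hr.le ≠ 1 := by
  intro h
  have := lt_bump (α := α) (w := w) (x := α + w / 2) hr (by linarith) (by linarith)
  rw [← bumpPerm_apply hr.le, h] at this
  exact this.false

lemma commute_bumpPerm {s : Equiv.Perm ℝ} (hr : 1 ≤ r) (hs : Monotone s)
    (hfix : ∀ x, α ≤ x → s x = x) : Commute s (bumpPerm r α w hr) := by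
  refine Equiv.ext fun y => ?_
  simp only [Equiv.Perm.mul_apply, bumpPerm_apply]
  by_cases hy : α ≤ y
  · have : α ≤ bump r α w y :=
      (bump_of_le hr le_rfl).symm.le.trans ((strictMono_bump (by linarith)).monotone hy)
    rw [hfix _ hy, hfix _ this]
  · have hy : y ≤ α := (not_le.1 hy).le
    rw [bump_of_le hr hy, bump_of_le hr ((hs hy).trans_eq (hfix α le_rfl))]

lemma bumpPerm_mul_ne_mul (hr : 1 < r) (hαβ : α < β) (hβ : β < α + w)
    (hle : α + w ≤ β + v) :
    bumpPerm r α w hr.le * bumpPerm r β v hr.le ≠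
      bumpPerm r β v hr.le * bumpPerm r α w hr.le := by
  intro h
  have e := DFunLike.congr_fun h β
  simp only [Equiv.Perm.mul_apply, bumpPerm_apply, bump_of_le (α := β) (w := v) hr.le le_rfl] at e
  have h₁ : β < bump r α w β := lt_bump hr hαβ hβ
  have h₂ : bump r α w β < α + w :=
    (strictMono_bump (by linarith) hβ).trans_eq (bump_of_ge hr.le le_rfl)
  linarith [lt_bump hr h₁ (h₂.trans_le hle)]

end Bump

section Thompson

variable {N : ℕ} {α w : ℝ}

lemma inFN_bumpPerm (hN : (2 : ℝ) ≤ N) (hα : NAdic N α) (hw : NAdic N w)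
    (h₁ : α + w ≤ 1) :
    InFN N (bumpPerm N α w (one_le_two.trans hN)) := by
  have hN₀ : 0 < N := by exact_mod_cast (show (0 : ℝ) < N by linarith)
  have hα₀ := hα.nonneg
  have hw₀ := hw.nonneg
  have hq₀ : 0 ≤ w / (N : ℝ) := by positivity
  have hq₁ : 0 ≤ w / (N : ℝ) ^ 2 := by positivity
  have hq₂ : w / (N : ℝ) ^ 2 ≤ w / 4 :=
    div_le_div_of_nonneg_left hw₀ (by norm_num) (by nlinarith)
  have hq₃ : w / (N : ℝ) ≤ w / 2 := div_le_div_of_nonneg_left hw₀ (by norm_num) hN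
  have hbreak₁ : NAdic N (α + w / (N : ℝ) ^ 2) := by
    simpa [div_div, sq] using hα.add hN₀ hw.div_natCast.div_natCast
  have hbreak₂ : NAdic N (α + w - w / N) :=
    (hα.add hN₀ hw).sub hN₀ hw.div_natCast (by linarith)
  refine ⟨continuous_bump, strictMono_bump (by linarith), fun x hx => ?_,
    bump_of_le (by linarith) hα₀, bump_of_ge (by linarith) h₁, ?_⟩
  · rcases not_and_or.1 hx with hx | hx
    · exact bump_of_le (by linarith) (by linarith [not_le.1 hx])
    · exact bump_of_ge (by linarith) (by linarith [not_le.1 hx])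
  refine ⟨{α, α + w / (N : ℝ) ^ 2, α + w - w / N, α + w}, fun x hx => ?_,
    fun x _ hx => exists_hasDerivAt_bump hN hx⟩
  simp only [Finset.mem_insert, Finset.mem_singleton] at hx
  rcases hx with rfl | rfl | rfl | rfl
  · exact ⟨⟨hα₀, by linarith⟩, hα⟩
  · exact ⟨⟨by linarith, by linarith⟩, hbreak₁⟩
  · exact ⟨⟨by linarith, by linarith⟩, hbreak₂⟩
  · exact ⟨⟨by linarith, h₁⟩, hα.add hN₀ hw⟩

lemma inF'_bumpPerm (hN : (2 : ℝ) ≤ N) (hα : NAdic N α) (hw : NAdic N w) (hα₀ : 0 < α)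
    (h₁ : α + w < 1) : InF' N (bumpPerm N α w (one_le_two.trans hN)) :=
  ⟨inFN_bumpPerm hN hα hw h₁.le, α, α + w, hα₀, by linarith [hw.nonneg],
    by linarith [hw.nonneg], h₁, fun _ hx => bump_of_le (by linarith) hx.2,
    fun _ hx => bump_of_ge (by linarith) hx.1⟩

lemma InD.eventually_fixes {f : Equiv.Perm ℝ} (hf : InD N f) :
    ∀ᶠ δ in 𝓝[<] (1 : ℝ), ∀ x, δ ≤ x → f x = x := by
  obtain ⟨⟨-, -, hout, -⟩, δ, -, hδ₁, hfix⟩ := hf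
  filter_upwards [Ioo_mem_nhdsLT hδ₁] with y hy x hx
  by_cases hx₁ : x ≤ 1
  · exact hfix x ⟨hy.1.le.trans hx, hx₁⟩
  · exact hout x fun h => hx₁ h.2

lemma exists_fixed_Ici_one_sub_inv_pow (hN : 1 < N) {S : Finset (Equiv.Perm ℝ)}
    (hS : ∀ f ∈ S, InD N f) :
    ∃ k : ℕ, 0 < 1 - ((N : ℝ) ^ k)⁻¹ ∧
      ∀ f ∈ S, ∀ x, 1 - ((N : ℝ) ^ k)⁻¹ ≤ x → f x = x := by
  have hr : (1 : ℝ) < N := by exact_mod_cast hN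
  have hlim : Tendsto (fun k : ℕ => 1 - ((N : ℝ) ^ k)⁻¹) atTop (𝓝[<] 1) := by
    refine tendsto_nhdsWithin_iff.2 ⟨?_, Eventually.of_forall fun k => ?_⟩
    · simpa using tendsto_const_nhds.sub
        (tendsto_inv_atTop_zero.comp (tendsto_pow_atTop_atTop_of_one_lt hr))
    · simp only [mem_Iio, sub_lt_self_iff]
      positivity
  have hfix := (eventually_all_finset S).2 fun f hf => (hS f hf).eventually_fixes
  have hpos : ∀ᶠ δ in 𝓝[<] (1 : ℝ), δ ∈ Ioo 0 1 := Ioo_mem_nhdsLT one_pos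
  exact (hlim.eventually (hpos.and hfix)).exists.imp
    fun k hk => ⟨hk.1.1, hk.2⟩

end Thompson

/-- for every finite subset of `D` there are nontrivial `g, h ∈ F'`
commuting with every element of the subset but not with each other. -/
theorem stmt10 (N : ℕ) (hN : 2 ≤ N) (S : Finset (Equiv.Perm ℝ)) (hS : ∀ x ∈ S, InD N x) :
    ∃ g h : Equiv.Perm ℝ, InF' N g ∧ InF' N h ∧ g ≠ 1 ∧ h ≠ 1 ∧
      (∀ x ∈ S, x * g = g * x) ∧ (∀ x ∈ S, x * h = h * x) ∧ g * h ≠ h * g := by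
  have hN₀ : 0 < N := by omega
  have hN₂ : (2 : ℝ) ≤ N := by exact_mod_cast hN
  obtain ⟨k, hc₀, hfix⟩ := exists_fixed_Ici_one_sub_inv_pow (by omega : 1 < N) hS
  set ε : ℝ := ((N : ℝ) ^ k)⁻¹
  set w := ε / N
  set u := w / N
  have hε₀ : 0 < ε := by positivity
  have hw₀ : 0 < w := by positivity
  have hu₀ : 0 < u := by positivity
  have huw : u < w := div_lt_self hw₀ (by linarith)
  have hwε : w ≤ ε / 2 := div_le_div_of_nonneg_left hε₀.le two_pos hN₂
  have hc : NAdic N (1 - ε) := NAdic.one.sub hN₀ (NAdic.inv_pow k) (by linarith)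
  have hw : NAdic N w := (NAdic.inv_pow k).div_natCast
  refine ⟨bumpPerm N (1 - ε) w _, bumpPerm N (1 - ε + u) w _,
    inF'_bumpPerm hN₂ hc hw hc₀ (by linarith),
    inF'_bumpPerm hN₂ (hc.add hN₀ hw.div_natCast) hw (by positivity) (by linarith),
    bumpPerm_ne_one (by linarith) hw₀, bumpPerm_ne_one (by linarith) hw₀,
    fun s hs => (commute_bumpPerm _ (hS s hs).1.2.1.monotone (hfix s hs)).eq,
    fun s hs => (commute_bumpPerm _ (hS s hs).1.2.1.monotone
      fun x hx => hfix s hs x (by linarith)).eq,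
    bumpPerm_mul_ne_mul (by linarith) (by linarith) (by linarith) (by linarith)⟩
end
end
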